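/- Let I be a finite nonempty index set, X a real |I|×d matrix, and n ∈ ℝ^I. If n(i) > 0 for all i ∈ I, then the MLE exists: there is m̂ ∈ ℝ^I with m̂(i) > 0 for all i, log m̂ in the column space of X, and l(m̂) ≥ l(m) for every m ∈ ℝ^I with m(i) > 0 for all i and log m in the column space of X. -/

import Mathlib

/-!
In the log scale `v = log m` the log-likelihood is `∑ i, (n i * v i - exp (v i))`, a sum of
one-variable functions `t ↦ a t - exp t` with `a > 0`. Each is bounded above and tends to `-∞`
as `|t| → ∞`, so the sum tends to `-∞` at infinity on `ℝ^I`; a continuous function with this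
property attains its maximum on any nonempty closed set, in particular on the column space of `X`.
-/

open Real Filter Set

-- `s log s - s` is the Fenchel conjugate of `exp` at `s`.
lemma mul_sub_exp_le {s : ℝ} (hs : 0 < s) (t : ℝ) : s * t - exp t ≤ s * log s - s := by
  have h := add_one_le_exp (t - log s)
  rw [exp_sub, exp_log hs, le_div_iff₀ hs] at h
  linarith

lemma tendsto_mul_sub_exp_cocompact {a : ℝ} (ha : 0 < a) :
    Tendsto (fun t => a * t - exp t) (cocompact ℝ) atBot := by
  rw [cocompact_eq_atBot_atTop, tendsto_sup]
  constructor
  · refine tendsto_atBot_mono (fun t => ?_) (tendsto_id.const_mul_atBot ha)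
    simpa using (exp_pos t).le
  · have hbound (t : ℝ) : a * t - exp t ≤ ((a + 1) * log (a + 1) - (a + 1)) - t := by
      linarith [mul_sub_exp_le (by linarith : 0 < a + 1) t]
    exact tendsto_atBot_mono hbound (tendsto_atBot_add_const_left _ _ tendsto_neg_atTop_atBot)

lemma tendsto_sum_apply_cocompact_atBot {ι : Type*} [Fintype ι] {X : ι → Type*}
    [∀ i, TopologicalSpace (X i)] {f : ∀ i, X i → ℝ} (hbdd : ∀ i, BddAbove (range (f i)))
    (htend : ∀ i, Tendsto (f i) (cocompact (X i)) atBot) :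
    Tendsto (fun x => ∑ i, f i (x i)) (cocompact (∀ i, X i)) atBot := by
  classical
  choose B hB using hbdd
  rw [← coprodᵢ_cocompact, tendsto_atBot]
  intro M
  refine mem_coprodᵢ_iff.2 fun i => ⟨_, (htend i).eventually_le_atBot (M - ∑ j, B j + B i), ?_⟩
  intro x (hx : f i (x i) ≤ M - ∑ j, B j + B i)
  have hrest : ∑ j ∈ Finset.univ.erase i, f j (x j) ≤ ∑ j ∈ Finset.univ.erase i, B j :=
    Finset.sum_le_sum fun j _ => hB j (mem_range_self _)
  calc ∑ j, f j (x j) = f i (x i) + ∑ j ∈ Finset.univ.erase i, f j (x j) :=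
        (Finset.add_sum_erase _ _ (Finset.mem_univ i)).symm
    _ ≤ (M - ∑ j, B j + B i) + ∑ j ∈ Finset.univ.erase i, B j := add_le_add hx hrest
    _ = M := by rw [← Finset.add_sum_erase _ B (Finset.mem_univ i)]; ring

lemma exists_isMaxOn_sum_mul_sub_exp {I : Type*} [Fintype I] {n : I → ℝ} (hn : ∀ i, 0 < n i)
    {S : Set (I → ℝ)} (hS : IsClosed S) (hne : S.Nonempty) :
    ∃ v ∈ S, IsMaxOn (fun v => ∑ i, (n i * v i - exp (v i))) S v := by
  obtain ⟨v₀, hv₀⟩ := hne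
  have hcont : Continuous fun v : I → ℝ => ∑ i, (n i * v i - exp (v i)) := by fun_prop
  have htend := tendsto_sum_apply_cocompact_atBot
    (fun i => ⟨_, forall_mem_range.2 (mul_sub_exp_le (hn i))⟩)
    (fun i => tendsto_mul_sub_exp_cocompact (hn i))
  exact hcont.continuousOn.exists_isMaxOn' hS hv₀
    ((htend.eventually_le_atBot _).filter_mono inf_le_left)

theorem mle_exists_of_pos_general {I : Type*} [Fintype I] {d : ℕ}
    (X : Matrix I (Fin d) ℝ) (n : I → ℝ) (hn : ∀ i, 0 < n i) :
    ∃ mhat : I → ℝ, (∀ i, 0 < mhat i) ∧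
      (∃ θ : Fin d → ℝ, (fun i => Real.log (mhat i)) = X.mulVec θ) ∧
      (∀ m : I → ℝ, (∀ i, 0 < m i) →
        (∃ θ : Fin d → ℝ, (fun i => Real.log (m i)) = X.mulVec θ) →
        (∑ i, n i * Real.log (m i) - ∑ i, m i) ≤
          (∑ i, n i * Real.log (mhat i) - ∑ i, mhat i)) := by
  set S : Submodule ℝ (I → ℝ) := LinearMap.range X.mulVecLin
  obtain ⟨v, ⟨θ, hθ⟩, hmax⟩ :=
    exists_isMaxOn_sum_mul_sub_exp hn S.closed_of_finiteDimensional ⟨0, S.zero_mem⟩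
  refine ⟨fun i => exp (v i), fun i => exp_pos _, ⟨θ, by simpa using hθ.symm⟩, ?_⟩
  rintro m hm ⟨θ', hθ'⟩
  have hlog : (fun i => log (m i)) ∈ S := ⟨θ', hθ'.symm⟩
  simpa [Finset.sum_sub_distrib, exp_log (hm _)] using hmax hlog

/-- If all cell counts are positive, the MLE exists (Corollary 2.3). -/
theorem mle_exists_of_pos {I : Type*} [Fintype I] [Nonempty I] {d : ℕ}
    (X : Matrix I (Fin d) ℝ) (n : I → ℝ) (hn : ∀ i, 0 < n i) :
    ∃ mhat : I → ℝ, (∀ i, 0 < mhat i) ∧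
      (∃ θ : Fin d → ℝ, (fun i => Real.log (mhat i)) = X.mulVec θ) ∧
      (∀ m : I → ℝ, (∀ i, 0 < m i) →
        (∃ θ : Fin d → ℝ, (fun i => Real.log (m i)) = X.mulVec θ) →
        (∑ i, n i * Real.log (m i) - ∑ i, m i) ≤
          (∑ i, n i * Real.log (mhat i) - ∑ i, mhat i)) :=
  mle_exists_of_pos_general X n hn
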